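/- Let f, g : I → ℝ be continuous strictly monotone functions on an interval I, and let a < b < c be points of I. Suppose f restricted to (a,b) is ≺-below g restricted to (a,b), and f restricted to (b,c) is ≺-below g restricted to (b,c), and both f and g are differentiable at b with f′(b) ≠ 0 and g′(b) ≠ 0. Then f restricted to (a,c) is ≺-below g restricted to (a,c). -/

import Mathlib

open Filter Set Topology

/-- `m` is the value of the quasi-arithmetic mean `A^[f]` on the tuple `v` from `I`,
i.e. `m ∈ I` and `f m = (f v₁ + ⋯ + f vₙ)/n`. -/
def IsQAM (I : Set ℝ) (f : ℝ → ℝ) {n : ℕ} (v : Fin n → ℝ) (m : ℝ) : Prop :=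
  m ∈ I ∧ f m = (∑ i, f (v i)) / n

/-- `A^[f] ≤ A^[g]` pointwise on all (nonempty) finite tuples from `I` (the relation `f ≺ g`). -/
def QALE (I : Set ℝ) (f g : ℝ → ℝ) : Prop :=
  ∀ (n : ℕ), 0 < n → ∀ (v : Fin n → ℝ), (∀ i, v i ∈ I) →
    ∀ a b : ℝ, IsQAM I f v a → IsQAM I g v b → a ≤ b

/-- `A^[f] = A^[g]` on all (nonempty) finite tuples from `I`. -/
def QAEQ (I : Set ℝ) (f g : ℝ → ℝ) : Prop :=
  ∀ (n : ℕ), 0 < n → ∀ (v : Fin n → ℝ), (∀ i, v i ∈ I) →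
    ∀ a b : ℝ, IsQAM I f v a → IsQAM I g v b → a = b


private lemma div_combo {A B C x t q : ℝ} (hxt : x < t) (htq : t < q)
    (hAB : A = B + C) :
    A / (q - x) * (q - x) = B / (t - x) * (t - x) + C / (q - t) * (q - t) := by
  rw [div_mul_cancel₀ _ (by linarith : q - x ≠ 0), div_mul_cancel₀ _ (by linarith : t - x ≠ 0),
    div_mul_cancel₀ _ (by linarith : q - t ≠ 0), hAB]

/-- glue convexity over two adjacent open intervals using differentiability at the junction -/
lemma convexOn_Ioo_glue {p q r d : ℝ} {h : ℝ → ℝ} (hpq : p < q) (hqr : q < r)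
    (C1 : ConvexOn ℝ (Ioo p q) h) (C2 : ConvexOn ℝ (Ioo q r) h)
    (Hd : HasDerivAt h d q) : ConvexOn ℝ (Ioo p r) h := by
  have hc : ContinuousAt h q := Hd.continuousAt
  -- K1 left / right interior slope monotonicity
  have K1 : ∀ x y z : ℝ, p < x → x < y → y < z → z < q →
      (h y - h x) / (y - x) ≤ (h z - h y) / (z - y) := fun x y z hx hxy hyz hz =>
    C1.slope_mono_adjacent ⟨hx, by linarith⟩ ⟨by linarith, hz⟩ hxy hyz
  have K1' : ∀ x y z : ℝ, q < x → x < y → y < z → z < r →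
      (h y - h x) / (y - x) ≤ (h z - h y) / (z - y) := fun x y z hx hxy hyz hz =>
    C2.slope_mono_adjacent ⟨hx, by linarith⟩ ⟨by linarith, hz⟩ hxy hyz
  -- K2 : extend to the endpoint q
  have K2 : ∀ x y : ℝ, p < x → x < y → y < q →
      (h y - h x) / (y - x) ≤ (h q - h y) / (q - y) := by
    intro x y hx hxy hy
    have hcz : Tendsto (fun z => (h z - h y) / (z - y)) (𝓝[<] q) (𝓝 ((h q - h y) / (q - y))) := by
      apply Tendsto.mono_left _ nhdsWithin_le_nhds
      exact (hc.sub continuousAt_const).div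
        (continuousAt_id.sub continuousAt_const) (sub_ne_zero.2 (ne_of_gt hy))
    refine ge_of_tendsto hcz ?_
    filter_upwards [eventually_nhdsWithin_of_eventually_nhds
      (eventually_gt_nhds hy), self_mem_nhdsWithin] with z hz1 (hz2 : z < q)
    exact K1 x y z hx hxy hz1 hz2
  have K2' : ∀ y z : ℝ, q < y → y < z → z < r →
      (h y - h q) / (y - q) ≤ (h z - h y) / (z - y) := by
    intro y z hy hyz hz
    have hcx : Tendsto (fun x => (h y - h x) / (y - x)) (𝓝[>] q) (𝓝 ((h y - h q) / (y - q))) := by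
      apply Tendsto.mono_left _ nhdsWithin_le_nhds
      exact (continuousAt_const.sub hc).div
        (continuousAt_const.sub continuousAt_id) (sub_ne_zero.2 (ne_of_gt hy))
    refine le_of_tendsto hcx ?_
    filter_upwards [eventually_nhdsWithin_of_eventually_nhds
      (eventually_lt_nhds hy), self_mem_nhdsWithin] with x hx1 (hx2 : q < x)
    exact K1' x y z hx2 hx1 hyz hz
  -- K3 : slopes into q from the left are at most d
  have K3 : ∀ x : ℝ, p < x → x < q → (h q - h x) / (q - x) ≤ d := by
    intro x hx hxq
    have hslope : Tendsto (fun t => (h q - h t) / (q - t)) (𝓝[<] q) (𝓝 d) := by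
      have h2 : Tendsto (slope h q) (𝓝[<] q) (𝓝 d) :=
        (hasDerivAt_iff_tendsto_slope.1 Hd).mono_left
          (nhdsWithin_mono _ (fun t ht => ne_of_lt ht))
      refine h2.congr' ?_
      filter_upwards [self_mem_nhdsWithin] with t (ht : t < q)
      rw [slope_comm, slope_def_field]
    refine ge_of_tendsto hslope ?_
    filter_upwards [eventually_nhdsWithin_of_eventually_nhds
      (eventually_gt_nhds hxq), self_mem_nhdsWithin] with t ht1 (ht2 : t < q)
    have h1 : (h t - h x) / (t - x) ≤ (h q - h t) / (q - t) := K2 x t hx ht1 ht2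
    have key : (h q - h x) / (q - x) * (q - x) ≤ (h q - h t) / (q - t) * (q - x) :=
      calc (h q - h x) / (q - x) * (q - x)
          = (h t - h x) / (t - x) * (t - x) + (h q - h t) / (q - t) * (q - t) :=
            div_combo ht1 ht2 (by ring)
        _ ≤ (h q - h t) / (q - t) * (t - x) + (h q - h t) / (q - t) * (q - t) := by
            have := mul_le_mul_of_nonneg_right h1 (by linarith : (0:ℝ) ≤ t - x)
            linarith
        _ = (h q - h t) / (q - t) * (q - x) := by ring
    exact le_of_mul_le_mul_right key (by linarith)
  -- K4 : slopes out of q to the right are at least d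
  have K4 : ∀ z : ℝ, q < z → z < r → d ≤ (h z - h q) / (z - q) := by
    intro z hqz hz
    have hslope : Tendsto (fun t => (h t - h q) / (t - q)) (𝓝[>] q) (𝓝 d) := by
      have h2 : Tendsto (slope h q) (𝓝[>] q) (𝓝 d) :=
        (hasDerivAt_iff_tendsto_slope.1 Hd).mono_left
          (nhdsWithin_mono _ (fun t ht => ne_of_gt ht))
      refine h2.congr' ?_
      filter_upwards [self_mem_nhdsWithin] with t (ht : q < t)
      rw [slope_def_field]
    refine le_of_tendsto hslope ?_
    filter_upwards [eventually_nhdsWithin_of_eventually_nhds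
      (eventually_lt_nhds hqz), self_mem_nhdsWithin] with t ht1 (ht2 : q < t)
    have h1 : (h t - h q) / (t - q) ≤ (h z - h t) / (z - t) := K2' t z ht2 ht1 hz
    have key : (h t - h q) / (t - q) * (z - q) ≤ (h z - h q) / (z - q) * (z - q) :=
      calc (h t - h q) / (t - q) * (z - q)
          = (h t - h q) / (t - q) * (t - q) + (h t - h q) / (t - q) * (z - t) := by ring
        _ ≤ (h t - h q) / (t - q) * (t - q) + (h z - h t) / (z - t) * (z - t) := by
            have := mul_le_mul_of_nonneg_right h1 (by linarith : (0:ℝ) ≤ z - t)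
            linarith
        _ = (h z - h q) / (z - q) * (z - q) := (div_combo ht2 ht1 (by ring)).symm
    exact le_of_mul_le_mul_right key (by linarith)
  -- crossing slope comparison helpers
  have cross : ∀ x z : ℝ, p < x → x < q → q < z → z < r →
      (h q - h x) / (q - x) ≤ (h z - h q) / (z - q) :=
    fun x z hx hxq hqz hz => le_trans (K3 x hx hxq) (K4 z hqz hz)
  refine convexOn_of_slope_mono_adjacent (convex_Ioo p r) ?_
  intro x y z hx hz hxy hyz
  obtain ⟨hxp, hxr⟩ := hx
  obtain ⟨hzp, hzr⟩ := hz
  rcases lt_trichotomy y q with hyq | rfl | hqy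
  · -- y < q
    rcases lt_trichotomy z q with hzq | rfl | hqz
    · exact K1 x y z hxp hxy hyz hzq
    · exact K2 x y hxp hxy hyq
    · -- x < y < q < z : s x y ≤ s y q ≤ s y z
      have h1 : (h y - h x) / (y - x) ≤ (h q - h y) / (q - y) := K2 x y hxp hxy hyq
      have h2 : (h q - h y) / (q - y) ≤ (h z - h q) / (z - q) := cross y z (by linarith) hyq hqz hzr
      -- s y z is between s y q and s q z
      have key : (h q - h y) / (q - y) * (z - y) ≤ (h z - h y) / (z - y) * (z - y) :=
        calc (h q - h y) / (q - y) * (z - y)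
            = (h q - h y) / (q - y) * (q - y) + (h q - h y) / (q - y) * (z - q) := by ring
          _ ≤ (h q - h y) / (q - y) * (q - y) + (h z - h q) / (z - q) * (z - q) := by
              have := mul_le_mul_of_nonneg_right h2 (by linarith : (0:ℝ) ≤ z - q)
              linarith
          _ = (h z - h y) / (z - y) * (z - y) := (div_combo hyq hqz (by ring)).symm
      exact le_trans h1 (le_of_mul_le_mul_right key (by linarith))
  · exact cross x z hxp hxy hyz hzr
  · -- q < y
    rcases lt_trichotomy x q with hxq | rfl | hqx
    · -- x < q < y < z : s x y ≤ s q y ≤ s y z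
      have h2 : (h y - h q) / (y - q) ≤ (h z - h y) / (z - y) := K2' y z hqy hyz hzr
      have h1 : (h q - h x) / (q - x) ≤ (h y - h q) / (y - q) := cross x y hxp hxq hqy (by linarith)
      have key : (h y - h x) / (y - x) * (y - x) ≤ (h y - h q) / (y - q) * (y - x) :=
        calc (h y - h x) / (y - x) * (y - x)
            = (h q - h x) / (q - x) * (q - x) + (h y - h q) / (y - q) * (y - q) :=
              div_combo hxq hqy (by ring)
          _ ≤ (h y - h q) / (y - q) * (q - x) + (h y - h q) / (y - q) * (y - q) := by
              have := mul_le_mul_of_nonneg_right h1 (by linarith : (0:ℝ) ≤ q - x)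
              linarith
          _ = (h y - h q) / (y - q) * (y - x) := by ring
      exact le_trans (le_of_mul_le_mul_right key (by linarith)) h2
    · exact K2' y z hqy hyz hzr
    · exact K1' x y z hqx hxy hyz hzr



lemma sum_ite_lt (u w : ℝ) (k n : ℕ) (hkn : k ≤ n) :
    (∑ i : Fin n, if (i : ℕ) < k then u else w) = k * u + (n - k : ℕ) * w := by
  rw [Fin.sum_univ_eq_sum_range (fun i => if i < k then u else w) n]
  have hsplit : Finset.range n = Finset.range k ∪ Finset.Ico k n := by
    rw [Finset.range_eq_Ico, Finset.range_eq_Ico, Finset.Ico_union_Ico_eq_Ico (Nat.zero_le k) hkn]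
  rw [hsplit, Finset.sum_union (by
    simp [Finset.disjoint_left, Finset.mem_Ico, Finset.mem_range]
    omega)]
  rw [Finset.sum_congr rfl (fun i hi => if_pos (Finset.mem_range.1 hi)),
    Finset.sum_congr rfl (fun i hi => if_neg (by simp [Finset.mem_Ico] at hi; omega)),
    Finset.sum_const, Finset.sum_const, Finset.card_range, Nat.card_Ico,
    nsmul_eq_mul, nsmul_eq_mul]

/-- existence of the quasi-arithmetic mean -/
lemma exists_isQAM {I : Set ℝ} (f : ℝ → ℝ) (hfc : ContinuousOn f I)
    (hf : MonotoneOn f I) {J : Set ℝ} (hJI : J ⊆ I) (hJ : J.OrdConnected)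
    {n : ℕ} (hn : 0 < n) (v : Fin n → ℝ) (hv : ∀ i, v i ∈ J) :
    ∃ m, IsQAM J f v m := by
  haveI : Nonempty (Fin n) := ⟨⟨0, hn⟩⟩
  obtain ⟨ilo, -, hlo⟩ := Finset.exists_min_image Finset.univ v ⟨Classical.arbitrary (Fin n),
    Finset.mem_univ _⟩
  obtain ⟨ihi, -, hhi⟩ := Finset.exists_max_image Finset.univ v ⟨Classical.arbitrary (Fin n),
    Finset.mem_univ _⟩
  set lo := v ilo; set hi := v ihi
  have hloJ : lo ∈ J := hv ilo
  have hhiJ : hi ∈ J := hv ihi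
  have hlohi : lo ≤ hi := hlo ihi (Finset.mem_univ _)
  have havg : (∑ i, f (v i)) / n ∈ Icc (f lo) (f hi) := by
    constructor
    · rw [le_div_iff₀ (by exact_mod_cast hn)]
      calc f lo * n = ∑ _i : Fin n, f lo := by
            rw [Finset.sum_const, Finset.card_univ, Fintype.card_fin, nsmul_eq_mul]; ring
        _ ≤ ∑ i, f (v i) := Finset.sum_le_sum fun i _ =>
            hf (hJI hloJ) (hJI (hv i)) (hlo i (Finset.mem_univ _))
    · rw [div_le_iff₀ (by exact_mod_cast hn)]
      calc (∑ i, f (v i)) ≤ ∑ _i : Fin n, f hi := Finset.sum_le_sum fun i _ =>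
            hf (hJI (hv i)) (hJI hhiJ) (hhi i (Finset.mem_univ _))
        _ = f hi * n := by
            rw [Finset.sum_const, Finset.card_univ, Fintype.card_fin, nsmul_eq_mul]; ring
  have hIcc : Icc (f lo) (f hi) ⊆ f '' Icc lo hi :=
    intermediate_value_Icc hlohi (hfc.mono ((hJ.out hloJ hhiJ).trans hJI))
  obtain ⟨m, hm, hfm⟩ := hIcc havg
  exact ⟨m, hJ.out hloJ hhiJ hm, hfm⟩


lemma isQAM_neg (I : Set ℝ) (f : ℝ → ℝ) {n : ℕ} (v : Fin n → ℝ) (m : ℝ) :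
    IsQAM I (fun x => -f x) v m ↔ IsQAM I f v m := by
  unfold IsQAM
  have hsum : (∑ i, -f (v i)) = -∑ i, f (v i) := by simp
  constructor
  · rintro ⟨h1, h2⟩
    refine ⟨h1, ?_⟩
    rw [hsum, neg_div, neg_inj] at h2
    exact h2
  · rintro ⟨h1, h2⟩
    refine ⟨h1, ?_⟩
    rw [hsum, neg_div, neg_inj]
    exact h2

lemma qale_neg_left (I : Set ℝ) (f g : ℝ → ℝ) :
    QALE I (fun x => -f x) g ↔ QALE I f g := by
  constructor <;> intro H n hn v hv A B hA hB
  · exact H n hn v hv A B ((isQAM_neg I f v A).2 hA) hB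
  · exact H n hn v hv A B ((isQAM_neg I f v A).1 hA) hB

lemma qale_neg_right (I : Set ℝ) (f g : ℝ → ℝ) :
    QALE I f (fun x => -g x) ↔ QALE I f g := by
  constructor <;> intro H n hn v hv A B hA hB
  · exact H n hn v hv A B hA ((isQAM_neg I g v B).2 hB)
  · exact H n hn v hv A B hA ((isQAM_neg I g v B).1 hB)

lemma qale_glue_mono
    (I : Set ℝ) (hI : I.OrdConnected)
    (f g : ℝ → ℝ)
    (hfc : ContinuousOn f I) (hgc : ContinuousOn g I)
    (hf : StrictMonoOn f I) (hg : StrictMonoOn g I)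
    (a b c : ℝ) (ha : a ∈ I) (hb : b ∈ I) (hc : c ∈ I)
    (hab : a < b) (hbc : b < c)
    (h1 : QALE (Set.Ioo a b) f g) (h2 : QALE (Set.Ioo b c) f g)
    {f' g' : ℝ}
    (hfd : HasDerivAt f f' b) (hgd : HasDerivAt g g' b)
    (hf0 : f' ≠ 0) (hg0 : g' ≠ 0) :
    QALE (Set.Ioo a c) f g := by
  have memI : ∀ {x : ℝ}, x ∈ Ioo a c → x ∈ I := fun hx =>
    hI.out ha hc (Ioo_subset_Icc_self hx)
  set φ : ℝ → ℝ := Function.invFunOn f I with hφdef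
  have hφ : ∀ x ∈ I, φ (f x) = x := fun x hx => hf.injOn.leftInvOn_invFunOn hx
  -- image of open subintervals
  have himg : ∀ {α β : ℝ}, α ∈ I → β ∈ I → α < β → f '' Ioo α β = Ioo (f α) (f β) := by
    intro α β hα hβ hαβ
    apply Subset.antisymm
    · rintro - ⟨x, hx, rfl⟩
      have hxI : x ∈ I := hI.out hα hβ (Ioo_subset_Icc_self hx)
      exact ⟨hf hα hxI hx.1, hf hxI hβ hx.2⟩
    · exact intermediate_value_Ioo hαβ.le (hfc.mono (hI.out hα hβ))
  set h : ℝ → ℝ := g ∘ φ with hhdef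
  have hval : ∀ x ∈ I, h (f x) = g x := by
    intro x hx; simp only [hhdef, Function.comp_apply, hφ x hx]
  have hac : a < c := hab.trans hbc
  have hSac : f '' Ioo a c = Ioo (f a) (f c) := himg ha hc hac
  -- continuity of φ and h on the image
  have hφcont : ∀ t ∈ f '' Ioo a c, ContinuousAt φ t := by
    intro t ht
    have hφmono : StrictMonoOn φ (f '' Ioo a c) := by
      rintro - ⟨x, hx, rfl⟩ - ⟨y, hy, rfl⟩ hst
      rw [hφ x (memI hx), hφ y (memI hy)]
      exact (hf.lt_iff_lt (memI hx) (memI hy)).1 hst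
    have himg2 : φ '' (f '' Ioo a c) = Ioo a c := by
      rw [image_image]
      apply Subset.antisymm
      · rintro - ⟨x, hx, rfl⟩; simpa [hφ x (memI hx)] using hx
      · intro x hx; exact ⟨x, hx, hφ x (memI hx)⟩
    refine hφmono.continuousAt_of_image_mem_nhds ?_ ?_
    · rw [hSac]; exact isOpen_Ioo.mem_nhds (hSac ▸ ht)
    · rw [himg2]
      obtain ⟨x, hx, rfl⟩ := ht
      rw [hφ x (memI hx)]
      exact isOpen_Ioo.mem_nhds hx
  have hcont : ∀ t ∈ f '' Ioo a c, ContinuousAt h t := by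
    intro t ht
    obtain ⟨x, hx, rfl⟩ := ht
    have hφval : φ (f x) = x := hφ x (memI hx)
    have hgx : ContinuousAt g (φ (f x)) := by
      rw [hφval]
      exact hgc.continuousAt (Filter.mem_of_superset (isOpen_Ioo.mem_nhds hx)
        fun y hy => memI hy)
    exact hgx.comp (hφcont _ (mem_image_of_mem f hx))
  -- rational inequality from QALE
  have ratIneq : ∀ (α β : ℝ), α ∈ I → β ∈ I → α < β → QALE (Ioo α β) f g →
      ∀ x' ∈ f '' Ioo α β, ∀ z' ∈ f '' Ioo α β, ∀ k n : ℕ, 0 < k → k < n →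
      h (((k : ℝ) * x' + ((n - k : ℕ) : ℝ) * z') / n)
        ≤ ((k : ℝ) * h x' + ((n - k : ℕ) : ℝ) * h z') / n := by
    rintro α β hα hβ hαβ hQ - ⟨x, hx, rfl⟩ - ⟨z, hz, rfl⟩ k n hk hkn
    have hn : 0 < n := hk.trans hkn
    have hJI : Ioo α β ⊆ I := fun t ht => hI.out hα hβ (Ioo_subset_Icc_self ht)
    set v : Fin n → ℝ := fun i => if (i : ℕ) < k then x else z with hvdef
    have hvJ : ∀ i, v i ∈ Ioo α β := by
      intro i; simp only [hvdef]; split <;> assumption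
    have hsumf : (∑ i, f (v i)) = (k : ℝ) * f x + ((n - k : ℕ) : ℝ) * f z := by
      have : ∀ i : Fin n, f (v i) = if (i : ℕ) < k then f x else f z := by
        intro i; simp only [hvdef]; split <;> rfl
      rw [Finset.sum_congr rfl fun i _ => this i, sum_ite_lt _ _ _ _ hkn.le]
    have hsumg : (∑ i, g (v i)) = (k : ℝ) * g x + ((n - k : ℕ) : ℝ) * g z := by
      have : ∀ i : Fin n, g (v i) = if (i : ℕ) < k then g x else g z := by
        intro i; simp only [hvdef]; split <;> rfl
      rw [Finset.sum_congr rfl fun i _ => this i, sum_ite_lt _ _ _ _ hkn.le]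
    obtain ⟨mf, hmf⟩ := exists_isQAM f hfc hf.monotoneOn hJI Set.ordConnected_Ioo hn v hvJ
    obtain ⟨mg, hmg⟩ := exists_isQAM g hgc hg.monotoneOn hJI Set.ordConnected_Ioo hn v hvJ
    have hle : mf ≤ mg := hQ n hn v hvJ mf mg hmf hmg
    have e1 : ((k : ℝ) * f x + ((n - k : ℕ) : ℝ) * f z) / n = f mf := by
      rw [hmf.2, hsumf]
    have e2 : ((k : ℝ) * g x + ((n - k : ℕ) : ℝ) * g z) / n = g mg := by
      rw [hmg.2, hsumg]
    calc h (((k : ℝ) * f x + ((n - k : ℕ) : ℝ) * f z) / n)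
        = g mf := by rw [e1, hval mf (hJI hmf.1)]
      _ ≤ g mg := hg.monotoneOn (hJI hmf.1) (hJI hmg.1) hle
      _ = ((k : ℝ) * h (f x) + ((n - k : ℕ) : ℝ) * h (f z)) / n := by
          rw [hval x (hJI hx), hval z (hJI hz), e2]
  -- convexity on a piece
  have convexPiece : ∀ (α β : ℝ), α ∈ I → β ∈ I → α < β → Ioo α β ⊆ Ioo a c →
      QALE (Ioo α β) f g → ConvexOn ℝ (Ioo (f α) (f β)) h := by
    intro α β hα hβ hαβ hsub hQ
    refine ⟨convex_Ioo _ _, ?_⟩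
    intro x' hx' z' hz' la mu hla hmu hlamu
    have hmu' : mu = 1 - la := by linarith
    subst hmu'
    rcases eq_or_lt_of_le hla with hla0 | hla0
    · rw [← hla0]; norm_num
    rcases eq_or_lt_of_le hmu with hmu0 | hmu0
    · have : la = 1 := by linarith
      rw [this]; norm_num
    have hla1 : la < 1 := by linarith
    -- the relevant point
    have hw : la • x' + (1 - la) • z' ∈ Ioo (f α) (f β) :=
      (convex_Ioo (f α) (f β)) hx' hz' hla hmu hlamu
    have hwin : la • x' + (1 - la) • z' ∈ f '' Ioo a c := by
      rw [hSac]
      have : Ioo (f α) (f β) ⊆ Ioo (f a) (f c) := by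
        rw [← hSac, ← himg hα hβ hαβ]
        exact image_mono hsub
      exact this hw
    -- limit along rationals
    have hL : (𝓝[Set.range ((↑) : ℚ → ℝ)] la).NeBot :=
      mem_closure_iff_nhdsWithin_neBot.1 (Rat.denseRange_cast la)
    set L := 𝓝[Set.range ((↑) : ℚ → ℝ)] la with hLdef
    have hAten : Tendsto (fun l : ℝ => h (l * x' + (1 - l) * z')) L
        (𝓝 (h (la * x' + (1 - la) * z'))) := by
      apply Tendsto.mono_left _ nhdsWithin_le_nhds
      have houter : ContinuousAt h (la * x' + (1 - la) * z') := by
        rw [show la * x' + (1 - la) * z' = la • x' + (1 - la) • z' by simp [smul_eq_mul]]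
        exact hcont _ hwin
      have hinner : ContinuousAt (fun l : ℝ => l * x' + (1 - l) * z') la := by fun_prop
      have hcomp := ContinuousAt.comp (g := h) (f := fun l : ℝ => l * x' + (1 - l) * z')
        (x := la) houter hinner
      exact hcomp
    have hBten : Tendsto (fun l : ℝ => l * h x' + (1 - l) * h z') L
        (𝓝 (la * h x' + (1 - la) * h z')) := by
      apply Tendsto.mono_left _ nhdsWithin_le_nhds
      exact Continuous.continuousAt (by fun_prop)
    have hEv : ∀ᶠ l in L, h (l * x' + (1 - l) * z') ≤ l * h x' + (1 - l) * h z' := by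
      filter_upwards [mem_nhdsWithin_of_mem_nhds (isOpen_Ioo.mem_nhds
        (⟨hla0, hla1⟩ : la ∈ Ioo (0:ℝ) 1)), self_mem_nhdsWithin] with l hl01 hlQ
      obtain ⟨ql, rfl⟩ := hlQ
      have hq0 : (0 : ℚ) < ql := by exact_mod_cast hl01.1
      have hq1 : ql < 1 := by exact_mod_cast hl01.2
      set k : ℕ := ql.num.toNat with hkdef
      set n : ℕ := ql.den with hndef
      have hnum : 0 < ql.num := Rat.num_pos.2 hq0
      have hk : 0 < k := by simp only [hkdef]; omega
      have hn0 : (0 : ℝ) < n := by exact_mod_cast ql.pos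
      have hlval : (ql : ℝ) = (k : ℝ) / (n : ℝ) := by
        rw [Rat.cast_def]
        congr 1
        rw [hkdef]
        exact_mod_cast (Int.toNat_of_nonneg hnum.le).symm
      have hkn : k < n := by
        have h1 : (k : ℝ) / (n : ℝ) < 1 := hlval ▸ hl01.2
        have h2 : (k : ℝ) < n := (div_lt_one hn0).1 h1
        exact_mod_cast h2
      have hsubcast : ((n - k : ℕ) : ℝ) = (n : ℝ) - k := by
        exact_mod_cast Nat.cast_sub hkn.le
      have e1 : (ql : ℝ) * x' + (1 - (ql : ℝ)) * z'
          = ((k : ℝ) * x' + ((n - k : ℕ) : ℝ) * z') / n := by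
        rw [hlval, hsubcast]; field_simp
      have e2 : (ql : ℝ) * h x' + (1 - (ql : ℝ)) * h z'
          = ((k : ℝ) * h x' + ((n - k : ℕ) : ℝ) * h z') / n := by
        rw [hlval, hsubcast]; field_simp
      rw [e1, e2]
      exact ratIneq α β hα hβ hαβ hQ x' (by rw [himg hα hβ hαβ]; exact hx') z'
        (by rw [himg hα hβ hαβ]; exact hz') k n hk hkn
    have := le_of_tendsto_of_tendsto hAten hBten hEv
    simpa [smul_eq_mul] using this
  -- derivative of h at f b
  have hφb : φ (f b) = b := hφ b hb
  have hfd' : HasDerivAt f f' (φ (f b)) := by rw [hφb]; exact hfd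
  have hev : ∀ᶠ y in 𝓝 (f b), f (φ y) = y := by
    have hmem : f '' Ioo a c ∈ 𝓝 (f b) := by
      rw [hSac]; exact isOpen_Ioo.mem_nhds ⟨hf ha hb hab, hf hb hc hbc⟩
    filter_upwards [hmem]
    rintro - ⟨x, hx, rfl⟩
    rw [hφ x (memI hx)]
  have Hφd : HasDerivAt φ f'⁻¹ (f b) :=
    HasDerivAt.of_local_left_inverse (hφcont _ (mem_image_of_mem f ⟨hab, hbc⟩)) hfd' hf0 hev
  have hgd' : HasDerivAt g g' (φ (f b)) := by rw [hφb]; exact hgd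
  have Hd : HasDerivAt h (g' * f'⁻¹) (f b) := hgd'.comp (f b) Hφd
  -- glue convexity
  have C1 : ConvexOn ℝ (Ioo (f a) (f b)) h :=
    convexPiece a b ha hb hab (Ioo_subset_Ioo le_rfl hbc.le) h1
  have C2 : ConvexOn ℝ (Ioo (f b) (f c)) h :=
    convexPiece b c hb hc hbc (Ioo_subset_Ioo hab.le le_rfl) h2
  have Cac : ConvexOn ℝ (Ioo (f a) (f c)) h :=
    convexOn_Ioo_glue (hf ha hb hab) (hf hb hc hbc) C1 C2 Hd
  -- Jensen
  intro n hn v hv mf mg hmf hmg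
  have hn0 : ((n : ℝ)) ≠ 0 := by exact_mod_cast hn.ne'
  refine (hg.le_iff_le (memI hmf.1) (memI hmg.1)).1 ?_
  have jensen := Cac.map_sum_le (t := Finset.univ) (w := fun _ : Fin n => (n : ℝ)⁻¹)
    (p := fun i => f (v i)) (fun i _ => by positivity)
    (by rw [Finset.sum_const, Finset.card_univ, Fintype.card_fin, nsmul_eq_mul,
      mul_inv_cancel₀ hn0])
    (fun i _ => by
      have hvI : v i ∈ I := memI (hv i)
      exact ⟨hf ha hvI (hv i).1, hf hvI hc (hv i).2⟩)
  have e1 : (∑ i : Fin n, (n : ℝ)⁻¹ • f (v i)) = (∑ i, f (v i)) / n := by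
    simp only [smul_eq_mul, ← Finset.mul_sum]
    rw [inv_mul_eq_div]
  have e2 : (∑ i : Fin n, (n : ℝ)⁻¹ • h (f (v i))) = (∑ i, g (v i)) / n := by
    simp only [smul_eq_mul]
    rw [Finset.sum_congr rfl fun i _ => by rw [hval _ (memI (hv i))], ← Finset.mul_sum,
      inv_mul_eq_div]
  rw [e1, e2] at jensen
  calc g mf = h (f mf) := (hval mf (memI hmf.1)).symm
    _ = h ((∑ i, f (v i)) / n) := by rw [hmf.2]
    _ ≤ (∑ i, g (v i)) / n := jensen
    _ = g mg := by rw [hmg.2]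


/-- if `f ≺ g` on `(a,b)` and on `(b,c)`, and both `f` and `g` are
differentiable at `b` with nonzero derivative there, then `f ≺ g` on `(a,c)`. -/
theorem qale_glue_of_differentiableAt
    (I : Set ℝ) (hI : I.OrdConnected)
    (f g : ℝ → ℝ)
    (hfc : ContinuousOn f I) (hgc : ContinuousOn g I)
    (hf : StrictMonoOn f I ∨ StrictAntiOn f I)
    (hg : StrictMonoOn g I ∨ StrictAntiOn g I)
    (a b c : ℝ) (ha : a ∈ I) (hb : b ∈ I) (hc : c ∈ I)
    (hab : a < b) (hbc : b < c)
    (h1 : QALE (Set.Ioo a b) f g) (h2 : QALE (Set.Ioo b c) f g)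
    (hfb : DifferentiableAt ℝ f b) (hgb : DifferentiableAt ℝ g b)
    (hfb0 : deriv f b ≠ 0) (hgb0 : deriv g b ≠ 0) :
    QALE (Set.Ioo a c) f g := by
  have hfM : ∀ (F : ℝ → ℝ), StrictAntiOn F I → StrictMonoOn (fun x => -F x) I :=
    fun F hF x hx y hy hxy => neg_lt_neg (hF hx hy hxy)
  rcases hf with hfm | hfa <;> rcases hg with hgm | hga
  · exact qale_glue_mono I hI f g hfc hgc hfm hgm a b c ha hb hc hab hbc h1 h2
      hfb.hasDerivAt hgb.hasDerivAt hfb0 hgb0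
  · refine (qale_neg_right (Ioo a c) f g).1 ?_
    exact qale_glue_mono I hI f (fun x => -g x) hfc hgc.neg hfm (hfM g hga)
      a b c ha hb hc hab hbc ((qale_neg_right (Ioo a b) f g).2 h1)
      ((qale_neg_right (Ioo b c) f g).2 h2) hfb.hasDerivAt hgb.hasDerivAt.neg hfb0
      (neg_ne_zero.2 hgb0)
  · refine (qale_neg_left (Ioo a c) f g).1 ?_
    exact qale_glue_mono I hI (fun x => -f x) g hfc.neg hgc (hfM f hfa) hgm
      a b c ha hb hc hab hbc ((qale_neg_left (Ioo a b) f g).2 h1)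
      ((qale_neg_left (Ioo b c) f g).2 h2) hfb.hasDerivAt.neg hgb.hasDerivAt
      (neg_ne_zero.2 hfb0) hgb0
  · refine (qale_neg_left (Ioo a c) f g).1 ((qale_neg_right (Ioo a c) (fun x => -f x) g).1 ?_)
    exact qale_glue_mono I hI (fun x => -f x) (fun x => -g x) hfc.neg hgc.neg
      (hfM f hfa) (hfM g hga) a b c ha hb hc hab hbc
      ((qale_neg_right (Ioo a b) (fun x => -f x) g).2 ((qale_neg_left (Ioo a b) f g).2 h1))
      ((qale_neg_right (Ioo b c) (fun x => -f x) g).2 ((qale_neg_left (Ioo b c) f g).2 h2))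
      hfb.hasDerivAt.neg hgb.hasDerivAt.neg (neg_ne_zero.2 hfb0) (neg_ne_zero.2 hgb0)
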